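/- The function y(r) = √(r+1) − arcoth(√(1 + r)) defined for r > 0 satisfies the ordinary differential equation 8 r² y'(r) y''(r) + 8 r (y'(r))² = 1. -/

import Mathlib

/-- Inverse hyperbolic cotangent, `arcoth x = (1/2) log((x+1)/(x−1))`. -/
noncomputable def arcoth (x : ℝ) : ℝ := (1 / 2) * Real.log ((x + 1) / (x - 1))

/-- The Eguchi–Hanson potential profile `y(r) = √(r+1) − arcoth(√(1+r))`. -/
noncomputable def yEH (r : ℝ) : ℝ := Real.sqrt (r + 1) - arcoth (Real.sqrt (1 + r))

lemma yEH_hasDerivAt {r : ℝ} (hr : 0 < r) :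
    HasDerivAt yEH (Real.sqrt (1 + r) / (2 * r)) r := by
  have h1 : (0:ℝ) < 1 + r := by linarith
  set s := Real.sqrt (1 + r) with hs
  have hsq : s ^ 2 = 1 + r := Real.sq_sqrt (le_of_lt h1)
  have hs1 : 1 < s := by nlinarith [Real.sqrt_nonneg (1 + r)]
  have hs0 : 0 < s := by linarith
  -- the simplified form of yEH near r
  have heq : yEH =ᶠ[nhds r] fun t =>
      Real.sqrt (1 + t) - (1/2) * (Real.log (Real.sqrt (1 + t) + 1)
        - Real.log (Real.sqrt (1 + t) - 1)) := by
    filter_upwards [Ioi_mem_nhds hr] with t ht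
    have h1t : (0:ℝ) < 1 + t := by simp at ht; linarith
    have hst : 1 < Real.sqrt (1 + t) := by
      nlinarith [Real.sqrt_nonneg (1 + t), Real.sq_sqrt h1t.le, Set.mem_Ioi.mp ht]
    unfold yEH arcoth
    rw [Real.log_div (by linarith) (by linarith), add_comm t 1]
  have hinner : HasDerivAt (fun t : ℝ => 1 + t) 1 r := by
    simpa using (hasDerivAt_id r).const_add (1:ℝ)
  have hsqrt : HasDerivAt (fun t : ℝ => Real.sqrt (1 + t)) (1 / (2 * s)) r := by
    exact ((Real.hasDerivAt_sqrt (ne_of_gt h1)).comp r hinner).congr_deriv (by rw [hs]; ring)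
  have hlog1 : HasDerivAt (fun t : ℝ => Real.log (Real.sqrt (1 + t) + 1))
      ((1 / (2 * s)) / (s + 1)) r := (hsqrt.add_const 1).log (by linarith)
  have hlog2 : HasDerivAt (fun t : ℝ => Real.log (Real.sqrt (1 + t) - 1))
      ((1 / (2 * s)) / (s - 1)) r := (hsqrt.sub_const 1).log (by
        intro h; nlinarith)
  have hg : HasDerivAt (fun t : ℝ =>
      Real.sqrt (1 + t) - (1/2) * (Real.log (Real.sqrt (1 + t) + 1)
        - Real.log (Real.sqrt (1 + t) - 1)))
      (1 / (2 * s) - (1/2) * ((1 / (2 * s)) / (s + 1) - (1 / (2 * s)) / (s - 1))) r :=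
    hsqrt.sub ((hlog1.sub hlog2).const_mul (1/2))
  have hval : 1 / (2 * s) - (1/2) * ((1 / (2 * s)) / (s + 1) - (1 / (2 * s)) / (s - 1))
      = s / (2 * r) := by
    have : s - 1 ≠ 0 := by intro h; nlinarith
    have : s + 1 ≠ 0 := by positivity
    field_simp
    linear_combination (-2 * s ^ 2) * hsq
  rw [← hval]
  exact hg.congr_of_eventuallyEq heq

lemma deriv_yEH_eventually {r : ℝ} (hr : 0 < r) :
    deriv yEH =ᶠ[nhds r] fun t => Real.sqrt (1 + t) / (2 * t) := by
  filter_upwards [Ioi_mem_nhds hr] with t ht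
  exact (yEH_hasDerivAt (by simpa using ht)).deriv

/-- `y(r) = √(r+1) − arcoth(√(1+r))` satisfies the reduced Monge–Ampère ODE
`8 r² y' y'' + 8 r (y')² = 1` for `r > 0`. -/
theorem eguchiHanson_potential_ODE :
    ∀ r : ℝ, 0 < r →
      8 * r ^ 2 * deriv yEH r * deriv (deriv yEH) r
        + 8 * r * (deriv yEH r) ^ 2 = 1 := by
  intro r hr
  have h1 : (0:ℝ) < 1 + r := by linarith
  set s := Real.sqrt (1 + r) with hs
  have hs0 : 0 < s := Real.sqrt_pos.mpr h1
  have hsq : s ^ 2 = 1 + r := Real.sq_sqrt (le_of_lt h1)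
  have hy1 : deriv yEH r = s / (2 * r) := (yEH_hasDerivAt hr).deriv
  have hinner : HasDerivAt (fun t : ℝ => 1 + t) 1 r := by
    simpa using (hasDerivAt_id r).const_add (1:ℝ)
  have hsqrt : HasDerivAt (fun t : ℝ => Real.sqrt (1 + t)) (1 / (2 * s)) r := by
    exact ((Real.hasDerivAt_sqrt (ne_of_gt h1)).comp r hinner).congr_deriv (by rw [hs]; ring)
  have hden : HasDerivAt (fun t : ℝ => 2 * t) 2 r := by
    simpa using (hasDerivAt_id r).const_mul (2:ℝ)
  have hdiv : HasDerivAt (fun t : ℝ => Real.sqrt (1 + t) / (2 * t))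
      (((1 / (2 * s)) * (2 * r) - s * 2) / (2 * r) ^ 2) r :=
    hsqrt.div hden (by positivity)
  have hy2 : deriv (deriv yEH) r
      = ((1 / (2 * s)) * (2 * r) - s * 2) / (2 * r) ^ 2 := by
    rw [(deriv_yEH_eventually hr).deriv_eq]
    exact hdiv.deriv
  rw [hy1, hy2]
  field_simp
  nlinarith [hsq, sq_nonneg s, sq_nonneg r]
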